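/- arXiv:2410.00300 — 4 statements merged into one kernel-verified Lean document; each statement's English description precedes it below -/
import Mathlib

section
/- For λ > -1, λ ≠ 0, and a probability pair (p, q) with p + q > 0, the quantity φ = ((p+q)/2) · [1 - (λ·2^λ/(2^λ - 1)) · (1/λ)(1 - (p/(p+q))^{λ+1} - (q/(p+q))^{λ+1})] is nonnegative. -/
/-- Cell-wise contribution to the power-divergence-type asymmetry measure. -/
noncomputable def phi (l p q : ℝ) : ℝ :=
  ((p + q) / 2) *
    (1 - (l * (2:ℝ) ^ l / ((2:ℝ) ^ l - 1)) *
      ((1 / l) * (1 - (p / (p + q)) ^ (l + 1) - (q / (p + q)) ^ (l + 1))))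

/-- Two-point convexity inequality for `rpow` with exponent `≥ 1`. -/
lemma two_pt_convex {x y s : ℝ} (hx : 0 ≤ x) (hy : 0 ≤ y) (hs : 1 ≤ s) :
    ((x + y) / 2) ^ s ≤ (x ^ s + y ^ s) / 2 := by
  have h := Real.rpow_arith_mean_le_arith_mean_rpow (Finset.univ : Finset (Fin 2))
      ![1/2, 1/2] ![x, y] (by intro i _; fin_cases i <;> norm_num)
      (by simp [Fin.sum_univ_succ]; norm_num)
      (by intro i _; fin_cases i <;> simpa) hs
  simp only [Fin.sum_univ_succ, Fin.sum_univ_zero, Matrix.cons_val_zero, Matrix.cons_val_one,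
    Matrix.head_cons, add_zero] at h
  calc ((x + y) / 2) ^ s = (1/2 * x + 1/2 * y) ^ s := by ring_nf
    _ ≤ 1/2 * x ^ s + 1/2 * y ^ s := h
    _ = (x ^ s + y ^ s) / 2 := by ring

/-- Convexity: for `s ≥ 1` and `a + b = 1`, `2^(1-s) ≤ a^s + b^s`. -/
lemma key_convex {a b s : ℝ} (ha : 0 ≤ a) (hb : 0 ≤ b) (hab : a + b = 1) (hs : 1 ≤ s) :
    (2:ℝ) ^ (1 - s) ≤ a ^ s + b ^ s := by
  have h := two_pt_convex ha hb hs
  rw [hab] at h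
  have h2 : ((1:ℝ)/2) ^ s = (2:ℝ) ^ (-s) := by
    rw [Real.rpow_neg (by norm_num), ← Real.inv_rpow (by norm_num)]
    norm_num
  have h3 : (2:ℝ) ^ (1 - s) = 2 * (2:ℝ) ^ (-s) := by
    rw [show (1:ℝ) - s = 1 + (-s) by ring, Real.rpow_add (by norm_num), Real.rpow_one]
  rw [h2] at h; rw [h3]; linarith

/-- Concavity: for `0 < s ≤ 1` and `a + b = 1`, `a^s + b^s ≤ 2^(1-s)`. -/
lemma key_concave {a b s : ℝ} (ha : 0 ≤ a) (hb : 0 ≤ b) (hab : a + b = 1)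
    (hs0 : 0 < s) (hs : s ≤ 1) :
    a ^ s + b ^ s ≤ (2:ℝ) ^ (1 - s) := by
  have hinv : 1 ≤ 1 / s := by rw [le_div_iff₀ hs0]; linarith
  have hx : 0 ≤ a ^ s := Real.rpow_nonneg ha _
  have hy : 0 ≤ b ^ s := Real.rpow_nonneg hb _
  have h := two_pt_convex hx hy hinv
  have e1 : (a ^ s) ^ (1/s) = a := by
    rw [← Real.rpow_mul ha, mul_one_div_cancel hs0.ne', Real.rpow_one]
  have e2 : (b ^ s) ^ (1/s) = b := by
    rw [← Real.rpow_mul hb, mul_one_div_cancel hs0.ne', Real.rpow_one]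
  rw [e1, e2, hab] at h
  -- h : ((a^s + b^s)/2) ^ (1/s) ≤ 1/2
  have hA : 0 ≤ (a ^ s + b ^ s) / 2 := by positivity
  have h4 : (a ^ s + b ^ s) / 2 ≤ ((1:ℝ)/2) ^ s := by
    have := Real.rpow_le_rpow (Real.rpow_nonneg hA _) h hs0.le
    rwa [← Real.rpow_mul hA, one_div_mul_cancel hs0.ne', Real.rpow_one] at this
  have h2 : ((1:ℝ)/2) ^ s = (2:ℝ) ^ (-s) := by
    rw [Real.rpow_neg (by norm_num), ← Real.inv_rpow (by norm_num)]
    norm_num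
  have h3 : (2:ℝ) ^ (1 - s) = 2 * (2:ℝ) ^ (-s) := by
    rw [show (1:ℝ) - s = 1 + (-s) by ring, Real.rpow_add (by norm_num), Real.rpow_one]
  rw [h2] at h4; rw [h3]; linarith

theorem phi_nonneg (l p q : ℝ) (hl : l > -1) (hl0 : l ≠ 0)
    (hp : 0 ≤ p) (hq : 0 ≤ q) (hpq : 0 < p + q) :
    0 ≤ phi l p q := by
  unfold phi
  set a : ℝ := p / (p + q) with ha_def
  set b : ℝ := q / (p + q) with hb_def
  have ha : 0 ≤ a := div_nonneg hp hpq.le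
  have hb : 0 ≤ b := div_nonneg hq hpq.le
  have hab : a + b = 1 := by
    rw [ha_def, hb_def, ← add_div, div_self hpq.ne']
  have ht : (0:ℝ) < (2:ℝ) ^ l := Real.rpow_pos_of_pos (by norm_num) l
  set t : ℝ := (2:ℝ) ^ l with ht_def
  have h1t : (2:ℝ) ^ (1 - (l+1)) = 1 / t := by
    rw [ht_def, show (1:ℝ) - (l+1) = -l by ring, Real.rpow_neg (by norm_num), one_div]
  have hE : 1 - l * t / (t - 1) * (1 / l * (1 - a ^ (l+1) - b ^ (l+1)))
      = (t * (a ^ (l+1) + b ^ (l+1)) - 1) / (t - 1) ∨ t - 1 = 0 := by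
    by_cases h : t - 1 = 0
    · right; exact h
    · left; field_simp; ring
  apply mul_nonneg (by positivity)
  rcases lt_or_gt_of_ne hl0 with hneg | hpos
  · -- l < 0 : t < 1
    have htlt : t < 1 := by
      rw [ht_def, show (1:ℝ) = (2:ℝ) ^ (0:ℝ) by simp]
      exact Real.rpow_lt_rpow_left_iff (by norm_num) |>.mpr hneg
    have hkey : a ^ (l+1) + b ^ (l+1) ≤ 1 / t := by
      rw [← h1t]
      exact key_concave ha hb hab (by linarith) (by linarith)
    rcases hE with hE | hE
    · rw [hE]
      have hnum : t * (a ^ (l+1) + b ^ (l+1)) - 1 ≤ 0 := by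
        have : t * (a ^ (l+1) + b ^ (l+1)) ≤ t * (1/t) :=
          mul_le_mul_of_nonneg_left hkey ht.le
        rw [mul_one_div_cancel ht.ne'] at this
        linarith
      exact div_nonneg_of_nonpos (by linarith) (by linarith)
    · linarith
  · -- l > 0 : t > 1
    have htgt : 1 < t := by
      rw [ht_def, show (1:ℝ) = (2:ℝ) ^ (0:ℝ) by simp]
      exact Real.rpow_lt_rpow_left_iff (by norm_num) |>.mpr hpos
    have hkey : 1 / t ≤ a ^ (l+1) + b ^ (l+1) := by
      rw [← h1t]
      exact key_convex ha hb hab (by linarith)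
    rcases hE with hE | hE
    · rw [hE]
      apply div_nonneg _ (by linarith)
      have : t * (1/t) ≤ t * (a ^ (l+1) + b ^ (l+1)) :=
        mul_le_mul_of_nonneg_left hkey ht.le
      rw [mul_one_div_cancel ht.ne'] at this
      linarith
    · linarith
end

section
/- For λ > -1, λ ≠ 0, and p, q ≥ 0 with p + q > 0, the cell contribution φ = ((p+q)/2)[1 - (λ·2^λ/(2^λ-1))·(1/λ)(1 - (p/(p+q))^{λ+1} - (q/(p+q))^{λ+1})] equals zero if and only if p = q. -/
lemma key (s : ℝ) (hs : 0 < s) (hs1 : s ≠ 1) (a b : ℝ) (ha : 0 ≤ a) (hb : 0 ≤ b)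
    (hab : a + b = 1) : a ^ s + b ^ s = 2 * (1 / 2 : ℝ) ^ s ↔ a = b := by
  constructor
  · intro h
    by_contra hne
    have hhalf : (0:ℝ) < 1/2 := by norm_num
    rcases lt_or_gt_of_ne hs1 with hlt | hgt
    · have hc := (Real.strictConcaveOn_rpow hs hlt).2 (Set.mem_Ici.2 ha) (Set.mem_Ici.2 hb)
        hne hhalf hhalf (by norm_num)
      simp only [smul_eq_mul] at hc
      have : (1/2 : ℝ) * a + 1/2 * b = 1/2 := by linarith
      rw [this] at hc
      nlinarith [hc]
    · have hc := (strictConvexOn_rpow hgt).2 (Set.mem_Ici.2 ha) (Set.mem_Ici.2 hb)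
        hne hhalf hhalf (by norm_num)
      simp only [smul_eq_mul] at hc
      have : (1/2 : ℝ) * a + 1/2 * b = 1/2 := by linarith
      rw [this] at hc
      nlinarith [hc]
  · intro h
    subst h
    have : a = 1/2 := by linarith
    subst this
    ring

theorem phi_eq_zero_iff (l p q : ℝ) (hl : l > -1) (hl0 : l ≠ 0)
    (hp : 0 ≤ p) (hq : 0 ≤ q) (hpq : 0 < p + q) :
    phi l p q = 0 ↔ p = q := by
  have h2 : (0:ℝ) < 2 := by norm_num
  have hc : (0:ℝ) < (2:ℝ) ^ l := Real.rpow_pos_of_pos h2 l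
  have hc1 : (2:ℝ) ^ l ≠ 1 := by
    rcases lt_or_gt_of_ne hl0 with hlt | hgt
    · have := Real.rpow_lt_rpow_of_exponent_lt (by norm_num : (1:ℝ) < 2) hlt
      rw [Real.rpow_zero] at this
      exact this.ne
    · have := Real.rpow_lt_rpow_of_exponent_lt (by norm_num : (1:ℝ) < 2) hgt
      rw [Real.rpow_zero] at this
      exact this.ne'
  set a := p / (p + q) with ha_def
  set b := q / (p + q) with hb_def
  have hab : a + b = 1 := by rw [ha_def, hb_def]; field_simp
  have ha : 0 ≤ a := div_nonneg hp hpq.le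
  have hb : 0 ≤ b := div_nonneg hq hpq.le
  have hs : 0 < l + 1 := by linarith
  have hs1 : l + 1 ≠ 1 := by intro h; exact hl0 (by linarith)
  have hkey := key (l + 1) hs hs1 a b ha hb hab
  set A := a ^ (l+1) + b ^ (l+1) with hA_def
  set c := (2:ℝ) ^ l with hc_def
  have hsub : c - 1 ≠ 0 := sub_ne_zero.2 hc1
  have hhalf : 2 * (1/2 : ℝ) ^ (l + 1) = c⁻¹ := by
    rw [one_div, Real.inv_rpow h2.le, Real.rpow_add h2, Real.rpow_one, hc_def]
    field_simp
  have hX : 1 - (l * c / (c - 1)) * ((1 / l) * (1 - a ^ (l+1) - b ^ (l+1)))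
      = (c * A - 1) / (c - 1) := by
    rw [hA_def]; field_simp; ring
  have hiff : phi l p q = 0 ↔ A = c⁻¹ := by
    unfold phi
    rw [← ha_def, ← hb_def, ← hc_def, hX]
    constructor
    · intro h
      rcases mul_eq_zero.1 h with h' | h'
      · exact absurd h' (by positivity)
      · rcases div_eq_zero_iff.1 h' with h'' | h''
        · exact eq_inv_of_mul_eq_one_right (by linarith)
        · exact absurd h'' hsub
    · intro h
      rw [h, mul_inv_cancel₀ hc.ne']
      simp
  rw [hiff, ← hhalf, hkey, ha_def, hb_def]
  constructor
  · intro h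
    rw [div_eq_div_iff hpq.ne' hpq.ne'] at h
    exact mul_right_cancel₀ hpq.ne' h
  · intro h; rw [h]
end

section
/- The power-divergence-type measure Φ^(λ), defined as the sum over all off-diagonal cells (i,j), i ≠ j, of the cell contributions φ_{ij}, satisfies 0 ≤ Φ^(λ) ≤ 1, where the normalized probabilities p*_{ij} sum to 1 over off-diagonal cells. -/
open Finset in
/-- The power-divergence-type measure: sum of cell contributions over off-diagonal cells. -/
noncomputable def Phi (R : ℕ) (l : ℝ) (p : Fin R → Fin R → ℝ) : ℝ :=
  ∑ i : Fin R, ∑ j : Fin R, if i = j then 0 else phi l (p i j) (p j i)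

lemma lower_S {l t u : ℝ} (hl : 0 < l) (ht : 0 ≤ t) (hu : 0 ≤ u) (htu : t + u = 1) :
    1 ≤ (2:ℝ) ^ l * (t ^ (l + 1) + u ^ (l + 1)) := by
  lift t to NNReal using ht
  lift u to NNReal using hu
  have htu' : t + u = 1 := by exact_mod_cast htu
  have h := NNReal.rpow_add_le_mul_rpow_add_rpow t u (p := l + 1) (by linarith)
  rw [htu', NNReal.one_rpow] at h
  have h' := NNReal.coe_le_coe.2 h
  push_cast at h' ⊢
  have : l + 1 - 1 = l := by ring
  rw [this] at h'
  exact h'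

lemma upper_S {l t u : ℝ} (hl1 : -1 < l) (hl : l < 0) (ht : 0 ≤ t) (hu : 0 ≤ u) (htu : t + u = 1) :
    (2:ℝ) ^ l * (t ^ (l + 1) + u ^ (l + 1)) ≤ 1 := by
  lift t to NNReal using ht
  lift u to NNReal using hu
  have htu' : t + u = 1 := by exact_mod_cast htu
  set q : ℝ := l + 1 with hq
  have hq0 : 0 < q := by simp only [hq]; linarith
  have hq1 : 1 ≤ 1 / q := one_le_one_div hq0 (by simp only [hq]; linarith)
  have h := NNReal.rpow_arith_mean_le_arith_mean2_rpow (1/2) (1/2) (t ^ q) (u ^ q)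
    (add_halves 1) hq1
  rw [← NNReal.rpow_mul, ← NNReal.rpow_mul, mul_one_div_cancel hq0.ne', NNReal.rpow_one,
    NNReal.rpow_one] at h
  have h2 := NNReal.rpow_le_rpow h hq0.le
  rw [← NNReal.rpow_mul, one_div_mul_cancel hq0.ne', NNReal.rpow_one] at h2
  have hmid : (1/2 * t + 1/2 * u : NNReal) = 1/2 := by rw [← mul_add, htu', mul_one]
  rw [hmid] at h2
  have hr : (1/2:ℝ) * (t:ℝ) ^ q + (1/2) * (u:ℝ) ^ q ≤ (1/2:ℝ) ^ q := by
    have := NNReal.coe_le_coe.2 h2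
    push_cast at this
    convert this using 2 <;> norm_num
  have h2l : (2:ℝ) ^ l = 2 ^ q / 2 := by
    rw [show l = q - 1 by simp [hq], Real.rpow_sub two_pos, Real.rpow_one]
  have hhalf : (1/2:ℝ) ^ q = ((2:ℝ) ^ q)⁻¹ := by
    rw [one_div, Real.inv_rpow two_pos.le]
  rw [hhalf] at hr
  have hqpos : (0:ℝ) < 2 ^ q := Real.rpow_pos_of_pos two_pos q
  rw [h2l]
  rw [div_mul_eq_mul_div, div_le_one two_pos]
  calc (2:ℝ) ^ q * ((t:ℝ) ^ q + (u:ℝ) ^ q) ≤ 2 ^ q * (2 * (2^q)⁻¹) := by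
        have : (t:ℝ) ^ q + (u:ℝ) ^ q ≤ 2 * (2^q)⁻¹ := by linarith
        exact mul_le_mul_of_nonneg_left this hqpos.le
    _ = 2 := by field_simp

lemma phi_bounds {l : ℝ} (hl : l > -1) (hl0 : l ≠ 0) {a b : ℝ} (ha : 0 ≤ a) (hb : 0 ≤ b)
    (hab : 0 < a + b) : 0 ≤ phi l a b ∧ phi l a b ≤ (a + b) / 2 := by
  set t : ℝ := a / (a + b) with htd
  set u : ℝ := b / (a + b) with hud
  have ht : 0 ≤ t := div_nonneg ha hab.le
  have hu : 0 ≤ u := div_nonneg hb hab.le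
  have htu : t + u = 1 := by rw [htd, hud, ← add_div, div_self hab.ne']
  have hE : (0:ℝ) < 2 ^ l := Real.rpow_pos_of_pos two_pos l
  set S : ℝ := t ^ (l + 1) + u ^ (l + 1) with hS
  have hq0 : 0 < l + 1 := by linarith
  -- sign of 2^l - 1 and the key bounds, by cases on the sign of l
  have hD : (2:ℝ) ^ l - 1 ≠ 0 ∧ 0 ≤ (2:ℝ)^l * (1 - S) / (2^l - 1) ∧
      (2:ℝ)^l * (1 - S) / (2^l - 1) ≤ 1 := by
    rcases hl0.lt_or_gt with hneg | hpos
    · have hE1 : (2:ℝ) ^ l < 1 := Real.rpow_lt_one_of_one_lt_of_neg one_lt_two hneg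
      have hS1 : 1 ≤ S := by
        have h1 : t ≤ t ^ (l+1) := by
          calc t = t ^ (1:ℝ) := (Real.rpow_one t).symm
          _ ≤ t ^ (l+1) := Real.rpow_le_rpow_of_exponent_ge' ht (by linarith) hq0.le (by linarith)
        have h2 : u ≤ u ^ (l+1) := by
          calc u = u ^ (1:ℝ) := (Real.rpow_one u).symm
          _ ≤ u ^ (l+1) := Real.rpow_le_rpow_of_exponent_ge' hu (by linarith) hq0.le (by linarith)
        rw [hS]; linarith
      have hup : (2:ℝ) ^ l * S ≤ 1 := upper_S hl hneg ht hu htu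
      refine ⟨by linarith, ?_, ?_⟩
      · exact div_nonneg_of_nonpos (by nlinarith) (by linarith)
      · rw [div_le_one_iff]
        exact Or.inr (Or.inr ⟨by linarith, by nlinarith⟩)
    · have hE1 : (1:ℝ) < 2 ^ l := by
        calc (1:ℝ) = 2 ^ (0:ℝ) := (Real.rpow_zero 2).symm
        _ < 2 ^ l := Real.rpow_lt_rpow_of_exponent_lt one_lt_two hpos
      have hS1 : S ≤ 1 := by
        have h1 : t ^ (l+1) ≤ t := by
          calc t ^ (l+1) ≤ t ^ (1:ℝ) :=
            Real.rpow_le_rpow_of_exponent_ge' ht (by linarith) (by norm_num) (by linarith)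
          _ = t := Real.rpow_one t
        have h2 : u ^ (l+1) ≤ u := by
          calc u ^ (l+1) ≤ u ^ (1:ℝ) :=
            Real.rpow_le_rpow_of_exponent_ge' hu (by linarith) (by norm_num) (by linarith)
          _ = u := Real.rpow_one u
        rw [hS]; linarith
      have hlo : 1 ≤ (2:ℝ) ^ l * S := lower_S hpos ht hu htu
      refine ⟨by linarith, ?_, ?_⟩
      · apply div_nonneg _ (by linarith)
        nlinarith
      · rw [div_le_one (by linarith)]
        nlinarith
  obtain ⟨hDne, hG1, hG2⟩ := hD
  have hphi : phi l a b = ((a + b) / 2) * (1 - (2:ℝ)^l * (1 - S) / (2^l - 1)) := by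
    rw [phi, hS, htd, hud]
    congr 1
    field_simp
    ring
  rw [hphi]
  constructor
  · apply mul_nonneg (by linarith) (by linarith)
  · nth_rewrite 2 [← mul_one ((a+b)/2)]
    apply mul_le_mul_of_nonneg_left (by linarith) (by linarith)

theorem Phi_mem_unit_interval (R : ℕ) (hR : 2 ≤ R) (l : ℝ) (hl : l > -1) (hl0 : l ≠ 0)
    (p : Fin R → Fin R → ℝ) (hp : ∀ i j, i ≠ j → 0 ≤ p i j)
    (hsum : (∑ i : Fin R, ∑ j : Fin R, if i = j then 0 else p i j) = 1)
    (hpos : ∀ i j, i ≠ j → 0 < p i j + p j i) :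
    0 ≤ Phi R l p ∧ Phi R l p ≤ 1 := by
  have hcell : ∀ i j : Fin R, i ≠ j →
      0 ≤ phi l (p i j) (p j i) ∧ phi l (p i j) (p j i) ≤ (p i j + p j i) / 2 :=
    fun i j hij => phi_bounds hl hl0 (hp i j hij) (hp j i (Ne.symm hij)) (hpos i j hij)
  constructor
  · apply Finset.sum_nonneg
    intro i _
    apply Finset.sum_nonneg
    intro j _
    split
    · exact le_refl _
    · exact (hcell i j (by assumption)).1
  · have h1 : Phi R l p ≤ ∑ i : Fin R, ∑ j : Fin R, if i = j then 0 else (p i j + p j i) / 2 := by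
      apply Finset.sum_le_sum
      intro i _
      apply Finset.sum_le_sum
      intro j _
      split
      · exact le_refl _
      · exact (hcell i j (by assumption)).2
    have hswap : (∑ i : Fin R, ∑ j : Fin R, if i = j then 0 else p j i)
        = ∑ i : Fin R, ∑ j : Fin R, if i = j then 0 else p i j := by
      rw [Finset.sum_comm]
      refine Finset.sum_congr rfl fun i _ => Finset.sum_congr rfl fun j _ => ?_
      simp [eq_comm]
    have h2 : (∑ i : Fin R, ∑ j : Fin R, if i = j then 0 else (p i j + p j i) / 2) = 1 := by
      have e : ∀ i j : Fin R, (if i = j then (0:ℝ) else (p i j + p j i) / 2)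
          = (if i = j then 0 else p i j) / 2 + (if i = j then 0 else p j i) / 2 := by
        intro i j; split <;> ring
      simp only [e, Finset.sum_add_distrib, ← Finset.sum_div]
      rw [hswap, hsum]
      norm_num
    linarith
end

section
/- Φ^(λ) = 1 if and only if for every pair i ≠ j, either p*_{ij} = 0 or p*_{ji} = 0 (maximal departure from symmetry). -/
lemma aux_gt (a b t : ℝ) (ha : 0 ≤ a) (hb : 0 ≤ b) (hab : a + b = 1) (ht : 1 < t) :
    a ^ t + b ^ t ≤ 1 ∧ (a ^ t + b ^ t = 1 ↔ a = 0 ∨ b = 0) := by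
  have ht0 : t ≠ 0 := by linarith
  have key : ∀ x : ℝ, 0 ≤ x → x ≤ 1 → x ^ t ≤ x := by
    intro x hx hx1
    rcases eq_or_lt_of_le hx with h | h
    · rw [← h, Real.zero_rpow ht0]
    · calc x ^ t ≤ x ^ (1:ℝ) := Real.rpow_le_rpow_of_exponent_ge h hx1 ht.le
        _ = x := Real.rpow_one x
  have ha1 : a ≤ 1 := by linarith
  have hb1 : b ≤ 1 := by linarith
  have h1 : a ^ t ≤ a := key a ha ha1
  have h2 : b ^ t ≤ b := key b hb hb1
  refine ⟨by linarith, ?_, ?_⟩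
  · intro h
    by_contra hc
    push_neg at hc
    have ha' : 0 < a := lt_of_le_of_ne ha (Ne.symm hc.1)
    have hb' : 0 < b := lt_of_le_of_ne hb (Ne.symm hc.2)
    have ha1' : a < 1 := by linarith
    have : a ^ t < a := by
      calc a ^ t < a ^ (1:ℝ) := Real.rpow_lt_rpow_of_exponent_gt ha' ha1' ht
        _ = a := Real.rpow_one a
    linarith
  · rintro (h | h)
    · rw [h]
      have : b = 1 := by linarith
      rw [this, Real.zero_rpow ht0, Real.one_rpow]; ring
    · rw [h]
      have : a = 1 := by linarith
      rw [this, Real.zero_rpow ht0, Real.one_rpow]; ring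

lemma aux_lt (a b t : ℝ) (ha : 0 ≤ a) (hb : 0 ≤ b) (hab : a + b = 1) (ht : 0 < t)
    (ht1 : t < 1) : 1 ≤ a ^ t + b ^ t ∧ (a ^ t + b ^ t = 1 ↔ a = 0 ∨ b = 0) := by
  have ht0 : t ≠ 0 := ht.ne'
  have key : ∀ x : ℝ, 0 ≤ x → x ≤ 1 → x ≤ x ^ t := by
    intro x hx hx1
    rcases eq_or_lt_of_le hx with h | h
    · rw [← h, Real.zero_rpow ht0]
    · calc x = x ^ (1:ℝ) := (Real.rpow_one x).symm
        _ ≤ x ^ t := Real.rpow_le_rpow_of_exponent_ge h hx1 ht1.le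
  have ha1 : a ≤ 1 := by linarith
  have hb1 : b ≤ 1 := by linarith
  have h1 : a ≤ a ^ t := key a ha ha1
  have h2 : b ≤ b ^ t := key b hb hb1
  refine ⟨by linarith, ?_, ?_⟩
  · intro h
    by_contra hc
    push_neg at hc
    have ha' : 0 < a := lt_of_le_of_ne ha (Ne.symm hc.1)
    have hb' : 0 < b := lt_of_le_of_ne hb (Ne.symm hc.2)
    have ha1' : a < 1 := by linarith
    have : a < a ^ t := by
      calc a = a ^ (1:ℝ) := (Real.rpow_one a).symm
        _ < a ^ t := Real.rpow_lt_rpow_of_exponent_gt ha' ha1' ht1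
    linarith
  · rintro (h | h)
    · rw [h]
      have : b = 1 := by linarith
      rw [this, Real.zero_rpow ht0, Real.one_rpow]; ring
    · rw [h]
      have : a = 1 := by linarith
      rw [this, Real.zero_rpow ht0, Real.one_rpow]; ring

lemma phi_cell (l : ℝ) (hl : -1 < l) (hl0 : l ≠ 0) (p q : ℝ) (hp : 0 ≤ p) (hq : 0 ≤ q)
    (hs : 0 < p + q) :
    phi l p q ≤ (p + q) / 2 ∧ (phi l p q = (p + q) / 2 ↔ p = 0 ∨ q = 0) := by
  set s : ℝ := p + q with hsdef
  set a : ℝ := p / s with hadef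
  set b : ℝ := q / s with hbdef
  have ha : 0 ≤ a := div_nonneg hp hs.le
  have hb : 0 ≤ b := div_nonneg hq hs.le
  have hab : a + b = 1 := by
    rw [hadef, hbdef, ← add_div, div_self hs.ne']
  have hsne : s ≠ 0 := hs.ne'
  have hap : a = 0 ↔ p = 0 := by rw [hadef, div_eq_zero_iff]; simp [hsne]
  have hbq : b = 0 ↔ q = 0 := by rw [hbdef, div_eq_zero_iff]; simp [hsne]
  -- sign of 2^l - 1
  have h2pos : (0:ℝ) < 2 ^ l := Real.rpow_pos_of_pos (by norm_num) l
  set K : ℝ := (2:ℝ) ^ l / ((2:ℝ) ^ l - 1) with hKdef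
  set D : ℝ := 1 - a ^ (l + 1) - b ^ (l + 1) with hDdef
  have hden : ((2:ℝ) ^ l - 1) ≠ 0 := by
    rcases lt_or_gt_of_ne hl0 with h | h
    · have := Real.rpow_lt_one_of_one_lt_of_neg (by norm_num : (1:ℝ) < 2) h
      linarith
    · have := (Real.one_lt_rpow_iff_of_pos (by norm_num : (0:ℝ) < 2)).mpr (Or.inl ⟨by norm_num, h⟩)
      linarith
  have hE : phi l p q = (s / 2) * (1 - K * D) := by
    unfold phi
    rw [← hadef, ← hbdef, ← hsdef, ← hDdef]
    have : l * (2:ℝ) ^ l / ((2:ℝ) ^ l - 1) * (1 / l * D) = K * D := by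
      rw [hKdef]; field_simp
    rw [this]
  have hKD : 0 ≤ K * D ∧ (K * D = 0 ↔ a = 0 ∨ b = 0) := by
    rcases lt_or_gt_of_ne hl0 with h | h
    · -- l < 0 : K < 0, D ≤ 0
      have hKneg : K < 0 := by
        apply div_neg_of_pos_of_neg h2pos
        have := Real.rpow_lt_one_of_one_lt_of_neg (by norm_num : (1:ℝ) < 2) h
        linarith
      obtain ⟨hge, hiff⟩ := aux_lt a b (l + 1) ha hb hab (by linarith) (by linarith)
      have hDle : D ≤ 0 := by rw [hDdef]; linarith
      constructor
      · nlinarith [mul_nonneg (neg_nonneg.2 hKneg.le) (neg_nonneg.2 hDle)]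
      · rw [mul_eq_zero]
        constructor
        · rintro (h' | h')
          · exact absurd h' hKneg.ne
          · exact hiff.mp (by rw [hDdef] at h'; linarith)
        · intro h'
          right; rw [hDdef]; have := hiff.mpr h'; linarith
    · -- l > 0 : K > 0, D ≥ 0
      have hKpos : 0 < K := by
        apply div_pos h2pos
        have := (Real.one_lt_rpow_iff_of_pos (by norm_num : (0:ℝ) < 2)).mpr
          (Or.inl ⟨by norm_num, h⟩)
        linarith
      obtain ⟨hle, hiff⟩ := aux_gt a b (l + 1) ha hb hab (by linarith)
      have hDge : 0 ≤ D := by rw [hDdef]; linarith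
      constructor
      · exact mul_nonneg hKpos.le hDge
      · rw [mul_eq_zero]
        constructor
        · rintro (h' | h')
          · exact absurd h' hKpos.ne'
          · exact hiff.mp (by rw [hDdef] at h'; linarith)
        · intro h'
          right; rw [hDdef]; have := hiff.mpr h'; linarith
  obtain ⟨hKD0, hKDiff⟩ := hKD
  have hs2 : (0:ℝ) < s / 2 := by linarith
  constructor
  · rw [hE]; nlinarith [mul_nonneg hs2.le hKD0]
  · rw [hE]
    constructor
    · intro h
      have h1 : (1:ℝ) - K * D = 1 := by
        apply mul_left_cancel₀ hs2.ne'
        rw [h, mul_one]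
      have : K * D = 0 := by linarith
      rw [hKDiff] at this
      rcases this with h' | h'
      · exact Or.inl (hap.mp h')
      · exact Or.inr (hbq.mp h')
    · intro h
      have hz : K * D = 0 := by
        apply hKDiff.mpr
        rcases h with h | h
        · exact Or.inl (hap.mpr h)
        · exact Or.inr (hbq.mpr h)
      rw [hz]; ring

theorem Phi_eq_one_iff_max_asymm (R : ℕ) (hR : 2 ≤ R) (l : ℝ) (hl : l > -1) (hl0 : l ≠ 0)
    (p : Fin R → Fin R → ℝ) (hp : ∀ i j, i ≠ j → 0 ≤ p i j)
    (hsum : (∑ i : Fin R, ∑ j : Fin R, if i = j then 0 else p i j) = 1)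
    (hpos : ∀ i j, i ≠ j → 0 < p i j + p j i) :
    Phi R l p = 1 ↔ ∀ i j, i ≠ j → (p i j = 0 ∨ p j i = 0) := by
  have hswap : (∑ i : Fin R, ∑ j : Fin R, if i = j then (0:ℝ) else p j i) = 1 := by
    rw [Finset.sum_comm]
    simpa [eq_comm] using hsum
  have hhalf : (∑ i : Fin R, ∑ j : Fin R,
      if i = j then (0:ℝ) else (p i j + p j i) / 2) = 1 := by
    have hterm : ∀ i j : Fin R, (if i = j then (0:ℝ) else (p i j + p j i) / 2) =
        (if i = j then (0:ℝ) else p i j) / 2 + (if i = j then (0:ℝ) else p j i) / 2 := by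
      intro i j; split_ifs <;> ring
    simp_rw [hterm, Finset.sum_add_distrib, ← Finset.sum_div, hsum, hswap]
    norm_num
  have hle : ∀ x ∈ Finset.univ ×ˢ Finset.univ,
      (if x.1 = x.2 then (0:ℝ) else phi l (p x.1 x.2) (p x.2 x.1)) ≤
      (if x.1 = x.2 then (0:ℝ) else (p x.1 x.2 + p x.2 x.1) / 2) := by
    rintro ⟨i, j⟩ -
    dsimp only
    split_ifs with h
    · exact le_refl 0
    · exact (phi_cell l hl hl0 (p i j) (p j i) (hp i j h) (hp j i (Ne.symm h)) (hpos i j h)).1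
  have hPhi : Phi R l p = ∑ x ∈ Finset.univ ×ˢ Finset.univ,
      (if x.1 = x.2 then (0:ℝ) else phi l (p x.1 x.2) (p x.2 x.1)) := by
    rw [Phi, ← Finset.sum_product']
  have hH : (1:ℝ) = ∑ x ∈ Finset.univ ×ˢ Finset.univ,
      (if x.1 = x.2 then (0:ℝ) else (p x.1 x.2 + p x.2 x.1) / 2) := by
    rw [← hhalf, ← Finset.sum_product']
  rw [hPhi, hH, Finset.sum_eq_sum_iff_of_le hle]
  constructor
  · intro h i j hij
    have := h (i, j) (Finset.mem_product.mpr ⟨Finset.mem_univ i, Finset.mem_univ j⟩)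
    simp only [if_neg hij] at this
    exact (phi_cell l hl hl0 (p i j) (p j i) (hp i j hij) (hp j i (Ne.symm hij))
      (hpos i j hij)).2.mp this
  · rintro h ⟨i, j⟩ -
    dsimp only
    split_ifs with hij
    · rfl
    · exact (phi_cell l hl hl0 (p i j) (p j i) (hp i j hij) (hp j i (Ne.symm hij))
        (hpos i j hij)).2.mpr (h i j hij)
end
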